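/- (Conditional decoupling upper bound, abstract form.) Let φ = φ̃ + h be a decomposition of a random field φ : Ω → ℝ^S into independent components, where h is measurable with respect to a sub-σ-algebra F = σ(φ_{K₁}). Let ĥ be an independent copy of h (independent of φ̃ and of F), set φ̂ = φ̃ + ĥ, let G_δ = {sup_{x∈K₂} |h_x| ≤ δ/2} ∈ F and Ĝ_δ the analogous event for ĥ. Then for any increasing f₂ : ℝ^S → [0,1] depending only on coordinates in K₂, almost surely on G_δ: E[f₂(φ) | F] ≤ E[f₂(φ̂ + δ)] + P(Ĝ_δᶜ), where φ̂ + δ adds δ to every coordinate. -/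

import Mathlib

/-!
On `G_δ`, the observable `f₂(φ̃ + h)` is dominated by `Z = f₂(φ̃ + ĥ + δ) + 1_{Ĝ_δᶜ}`: on `Ĝ_δ`
the shift `δ` absorbs `h - ĥ` on `K₂`, which is all that `f₂` sees, and off `Ĝ_δ` the indicator
alone exceeds `f₂ ≤ 1`. As `G_δ ∈ 𝓕`, conditioning preserves this bound on `G_δ`, and `Z` is a
function of `(φ̃, ĥ)`, which is independent of `𝓕`, so `E[Z | 𝓕] = E[Z]`.
-/

open MeasureTheory ProbabilityTheory Set

theorem Monotone.apply_le_apply_of_le_on {S α β : Type*} [Preorder α] [Preorder β]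
    {f : (S → α) → β} (hf : Monotone f) {K : Set S}
    (hfK : ∀ η η' : S → α, (∀ x ∈ K, η x = η' x) → f η = f η') {η η' : S → α}
    (h : ∀ x ∈ K, η x ≤ η' x) : f η ≤ f η' := by
  classical
  calc f η = f (K.piecewise η η') := hfK _ _ fun x hx => (piecewise_eq_of_mem _ _ _ hx).symm
    _ ≤ f η' := hf fun x => by by_cases hx : x ∈ K <;> simp [hx, h x]

theorem Monotone.apply_add_le_apply_add_add_indicator {S : Type*} {f : (S → ℝ) → ℝ}
    (hf : Monotone f) {K : Set S} (hfK : ∀ η η' : S → ℝ, (∀ x ∈ K, η x = η' x) → f η = f η')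
    (hf01 : ∀ η, f η ∈ Icc (0 : ℝ) 1) {δ : ℝ} {η ζ ζ' : S → ℝ}
    (hζ : ∀ x ∈ K, |ζ x| ≤ δ / 2) :
    f (η + ζ) ≤
      f (η + ζ' + fun _ => δ) + {ξ : S → ℝ | ∀ x ∈ K, |ξ x| ≤ δ / 2}ᶜ.indicator 1 ζ' := by
  by_cases hζ' : ζ' ∈ {ξ : S → ℝ | ∀ x ∈ K, |ξ x| ≤ δ / 2}
  · rw [indicator_of_notMem (notMem_compl_iff.2 hζ'), add_zero]
    refine hf.apply_le_apply_of_le_on hfK fun x hx => ?_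
    simp only [Pi.add_apply]
    linarith [abs_le.1 (hζ x hx), abs_le.1 (hζ' x hx)]
  · rw [indicator_of_mem (mem_compl hζ'), Pi.one_apply]
    exact le_add_of_nonneg_of_le (hf01 _).1 (hf01 _).2

theorem measurableSet_forall_abs_le {S : Type*} {K : Set S} (hK : K.Countable) (r : ℝ) :
    MeasurableSet {η : S → ℝ | ∀ x ∈ K, |η x| ≤ r} := by
  simp only [ofPred_forall]
  exact .biInter hK fun x _ => measurableSet_le (measurable_pi_apply x).abs measurable_const

namespace ProbabilityTheory

variable {Ω : Type*} {m0 : MeasurableSpace Ω} {P : Measure Ω}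

theorem indep_sup_of_indep_of_indep_sup [IsProbabilityMeasure P] {mA mB F : MeasurableSpace Ω}
    (hA : mA ≤ m0) (hB : mB ≤ m0) (hF : F ≤ m0)
    (hAF : Indep mA F P) (hBFA : Indep mB (F ⊔ mA) P) :
    Indep (mA ⊔ mB) F P := by
  set p := image2 (· ∩ ·) {s | MeasurableSet[mA] s} {s | MeasurableSet[mB] s}
  have hp : IsPiSystem p := by
    rintro _ ⟨A, hA, B, hB, rfl⟩ _ ⟨A', hA', B', hB', rfl⟩ _
    exact ⟨A ∩ A', hA.inter hA', B ∩ B', hB.inter hB',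
      (inter_inter_inter_comm A B A' B').symm⟩
  have hgen : mA ⊔ mB = MeasurableSpace.generateFrom p := by
    refine le_antisymm (sup_le ?_ ?_) (MeasurableSpace.generateFrom_le ?_)
    · exact fun s hs => MeasurableSpace.measurableSet_generateFrom
        ⟨s, hs, univ, MeasurableSet.univ, inter_univ s⟩
    · exact fun s hs => MeasurableSpace.measurableSet_generateFrom
        ⟨univ, MeasurableSet.univ, s, hs, univ_inter s⟩
    · rintro _ ⟨A, hA, B, hB, rfl⟩
      exact (le_sup_left (b := mB) _ hA).inter (le_sup_right (a := mA) _ hB)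
  refine IndepSets.indep (sup_le hA hB) hF hp (@MeasurableSpace.isPiSystem_measurableSet Ω F) hgen
    F.generateFrom_measurableSet.symm ((IndepSets_iff _ _ _).2 ?_)
  rintro _ C ⟨A, hA, B, hB, rfl⟩ hC
  have hAFA : MeasurableSet[F ⊔ mA] A := le_sup_right (a := F) _ hA
  have hACFA : MeasurableSet[F ⊔ mA] (A ∩ C) := hAFA.inter (le_sup_left (b := mA) _ hC)
  calc P (A ∩ B ∩ C) = P (B ∩ (A ∩ C)) := by rw [inter_comm A B, inter_assoc]
    _ = P B * (P A * P C) := by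
      rw [(Indep_iff _ _ _).1 hBFA B _ hB hACFA, (Indep_iff _ _ _).1 hAF A C hA hC]
    _ = P (A ∩ B) * P C := by
      rw [inter_comm A B, (Indep_iff _ _ _).1 hBFA B A hB hAFA, mul_assoc]

theorem ae_condExp_le_integral_of_le_on [IsFiniteMeasure P] {m mZ : MeasurableSpace Ω}
    (hm : m ≤ m0) (hmZ : mZ ≤ m0)
    {X Z : Ω → ℝ} (hX : Integrable X P) (hZm : StronglyMeasurable[mZ] Z) (hZ : Integrable Z P)
    (hind : Indep mZ m P) {G : Set Ω} (hG : MeasurableSet[m] G) (hXZ : ∀ ω ∈ G, X ω ≤ Z ω) :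
    ∀ᵐ ω ∂P, ω ∈ G → P[X|m] ω ≤ ∫ ω', Z ω' ∂P := by
  have hmono : P[G.indicator X|m] ≤ᵐ[P] P[G.indicator Z|m] :=
    condExp_mono (hX.indicator (hm _ hG)) (hZ.indicator (hm _ hG)) (.of_forall fun ω => by
      by_cases hω : ω ∈ G <;> simp [hω, hXZ])
  filter_upwards [hmono, condExp_indicator hX hG, condExp_indicator hZ hG,
    condExp_indep_eq hmZ hm hZm hind] with ω hmono hXG hZG hZconst hω
  rwa [hXG, hZG, indicator_of_mem hω, indicator_of_mem hω, hZconst] at hmono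

end ProbabilityTheory

theorem conditional_decoupling_upper_general
    {Ω : Type*} {m0 : MeasurableSpace Ω} (P : Measure Ω) [IsProbabilityMeasure P]
    {S : Type*} [Countable S] (K₂ : Set S)
    (φtil h hhat : Ω → S → ℝ)
    (hφtilm : Measurable φtil) (hhatm : Measurable hhat)
    (𝓕 : MeasurableSpace Ω) (hF : 𝓕 ≤ m0)
    -- h is 𝓕-measurable
    (hhF : Measurable[𝓕] h)
    -- φ̃ is independent of 𝓕
    (hind1 : Indep (MeasurableSpace.comap φtil inferInstance) 𝓕 P)
    -- ĥ is independent of (φ̃, 𝓕)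
    (hind2 : Indep (MeasurableSpace.comap hhat inferInstance)
      (𝓕 ⊔ MeasurableSpace.comap φtil inferInstance) P)
    (f₂ : (S → ℝ) → ℝ) (hf₂m : Measurable f₂) (hf₂mono : Monotone f₂)
    (hf₂01 : ∀ η, f₂ η ∈ Icc (0:ℝ) 1)
    (hf₂supp : ∀ η η' : S → ℝ, (∀ x ∈ K₂, η x = η' x) → f₂ η = f₂ η')
    (δ : ℝ) :
    ∀ᵐ ω ∂P, (∀ x ∈ K₂, |h ω x| ≤ δ / 2) →
      (P[fun ω' => f₂ (fun x => φtil ω' x + h ω' x)|𝓕]) ω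
        ≤ (∫ ω', f₂ (fun x => φtil ω' x + hhat ω' x + δ) ∂P)
          + (P {ω' | ¬ ∀ x ∈ K₂, |hhat ω' x| ≤ δ / 2}).toReal := by
  have hbox := measurableSet_forall_abs_le K₂.to_countable (δ / 2)
  set Ĝ := {ω' | ∀ x ∈ K₂, |hhat ω' x| ≤ δ / 2}
  set fhat : Ω → ℝ := fun ω => f₂ (fun x => φtil ω x + hhat ω x + δ)
  set mZ := MeasurableSpace.comap φtil inferInstance ⊔ MeasurableSpace.comap hhat inferInstance
  have hmZ : mZ ≤ m0 := sup_le hφtilm.comap_le hhatm.comap_le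
  have hfhatZ : Measurable[mZ] fhat :=
    hf₂m.comp (((Measurable.of_comap_le le_sup_left).add (.of_comap_le le_sup_right)).add
      measurable_const)
  have hĜZ : MeasurableSet[mZ] Ĝ := (Measurable.of_comap_le le_sup_right) hbox
  have hfhat : Integrable fhat P :=
    .of_mem_Icc 0 1 (hfhatZ.mono hmZ le_rfl).aemeasurable (.of_forall fun _ => hf₂01 _)
  have hĜc : Integrable (Ĝᶜ.indicator (1 : Ω → ℝ)) P :=
    (integrable_const (1 : ℝ)).indicator (hmZ _ hĜZ).compl
  have hX : Integrable (fun ω => f₂ (fun x => φtil ω x + h ω x)) P :=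
    .of_mem_Icc 0 1 (hf₂m.comp (hφtilm.add (hhF.mono hF le_rfl))).aemeasurable
      (.of_forall fun _ => hf₂01 _)
  have hZ : Measurable[mZ] (fhat + Ĝᶜ.indicator 1) :=
    hfhatZ.add (measurable_const.indicator hĜZ.compl)
  filter_upwards [ae_condExp_le_integral_of_le_on hF hmZ hX hZ.stronglyMeasurable (hfhat.add hĜc)
    (indep_sup_of_indep_of_indep_sup hφtilm.comap_le hhatm.comap_le hF hind1 hind2) (hhF hbox)
    fun _ hω => hf₂mono.apply_add_le_apply_add_add_indicator hf₂supp hf₂01 hω]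
    with ω hω hG
  rw [integral_add' hfhat hĜc, integral_indicator_one (hmZ _ hĜZ).compl] at hω
  exact hω hG

theorem conditional_decoupling_upper
    {Ω : Type*} {m0 : MeasurableSpace Ω} (P : Measure Ω) [IsProbabilityMeasure P]
    {S : Type*} [Countable S] (K₁ K₂ : Set S) (hK : Disjoint K₁ K₂)
    (φtil h hhat : Ω → S → ℝ)
    (hφtilm : Measurable φtil) (hhm : Measurable h) (hhatm : Measurable hhat)
    -- ĥ is a copy of h
    (hcopy : P.map hhat = P.map h)
    (𝓕 : MeasurableSpace Ω) (hF : 𝓕 ≤ m0)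
    -- 𝓕 is the σ-algebra generated by φ restricted to K₁, where φ = φ̃ + h
    (hFdef : 𝓕 = MeasurableSpace.comap
      (fun ω => (fun x : K₁ => φtil ω x + h ω x)) inferInstance)
    -- h is 𝓕-measurable
    (hhF : Measurable[𝓕] h)
    -- φ̃ is independent of 𝓕
    (hind1 : Indep (MeasurableSpace.comap φtil inferInstance) 𝓕 P)
    -- ĥ is independent of (φ̃, 𝓕)
    (hind2 : Indep (MeasurableSpace.comap hhat inferInstance)
      (𝓕 ⊔ MeasurableSpace.comap φtil inferInstance) P)
    (f₂ : (S → ℝ) → ℝ) (hf₂m : Measurable f₂) (hf₂mono : Monotone f₂)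
    (hf₂01 : ∀ η, f₂ η ∈ Icc (0:ℝ) 1)
    (hf₂supp : ∀ η η' : S → ℝ, (∀ x ∈ K₂, η x = η' x) → f₂ η = f₂ η')
    (δ : ℝ) (hδ : 0 < δ) :
    ∀ᵐ ω ∂P, (∀ x ∈ K₂, |h ω x| ≤ δ / 2) →
      (P[fun ω' => f₂ (fun x => φtil ω' x + h ω' x)|𝓕]) ω
        ≤ (∫ ω', f₂ (fun x => φtil ω' x + hhat ω' x + δ) ∂P)
          + (P {ω' | ¬ ∀ x ∈ K₂, |hhat ω' x| ≤ δ / 2}).toReal :=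
  conditional_decoupling_upper_general P K₂ φtil h hhat hφtilm hhatm 𝓕 hF hhF hind1 hind2 f₂ hf₂m
    hf₂mono hf₂01 hf₂supp δ
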